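/- Let k ∈ ℕ and let a₁, …, a_{k+1} and b₁, …, b_{k+1} be nondecreasing sequences of rationals in [0,1] (functions ℕ → ℚ ∩ [0,1] with a_i(s+1) ≥ a_i(s) and b_i(s+1) ≥ b_i(s) for all s). Define d(s) = max_{1≤i≤k+1} min(a_i(s), 1 − b_i(s)). Then the sequence d changes monotonicity at most 2k+1 times: |{s ∈ ℕ : m^d_Σ(s+1) ≠ m^d_Σ(s)}| ≤ 2k+1. -/
import Mathlib


open Filter

/-- The Σ-mind-change function of a sequence of rationals: starts at `1`,
flips to `-1` on a strict decrease while in increasing mode, and flips back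
to `1` on a strict increase while in decreasing mode. -/
def mSigma (g : ℕ → ℚ) : ℕ → ℤ
  | 0 => 1
  | s + 1 =>
      if mSigma g s = 1 then (if g s ≤ g (s + 1) then 1 else -1)
      else (if g (s + 1) ≤ g s then -1 else 1)

/-- A fuzzy set: a function `ℕ → ℝ` with values in `[0,1]`. -/
def IsFuzzySet (A : ℕ → ℝ) : Prop := ∀ x, 0 ≤ A x ∧ A x ≤ 1

/-- `f` is a Σ⁰₁-approximation of the fuzzy set `A`. -/
def SigmaApprox (f : ℕ → ℕ → ℚ) (A : ℕ → ℝ) : Prop :=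
  Computable₂ f ∧ (∀ x s, 0 ≤ f x s ∧ f x s ≤ 1) ∧
    (∀ x s, f x s ≤ f x (s + 1)) ∧
    (∀ x, Tendsto (fun s => (f x s : ℝ)) atTop (nhds (A x)))

/-- A fuzzy set is computably enumerable if it has a Σ⁰₁-approximation. -/
def FuzzyCE (A : ℕ → ℝ) : Prop := ∃ f : ℕ → ℕ → ℚ, SigmaApprox f A

/-- `f` is a Δ⁰₂-approximation of the fuzzy set `A`. -/
def DeltaApprox (f : ℕ → ℕ → ℚ) (A : ℕ → ℝ) : Prop :=
  Computable₂ f ∧ (∀ x s, 0 ≤ f x s ∧ f x s ≤ 1) ∧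
    (∀ x, Tendsto (fun s => (f x s : ℝ)) atTop (nhds (A x)))

/-- A fuzzy set `A` is `n`-c.e. if it has a Δ⁰₂-approximation which starts at `0`
and changes monotonicity at most `n - 1` times. -/
def FuzzyNCE (n : ℕ) (A : ℕ → ℝ) : Prop :=
  ∃ f : ℕ → ℕ → ℚ, DeltaApprox f A ∧ (∀ x, f x 0 = 0) ∧
    (∀ x, {s | mSigma (f x) (s + 1) ≠ mSigma (f x) s}.Finite ∧
      {s | mSigma (f x) (s + 1) ≠ mSigma (f x) s}.ncard ≤ n - 1)

section MindChangeAux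

private lemma mSigma_succ (g : ℕ → ℚ) (s : ℕ) :
    mSigma g (s+1) = if mSigma g s = 1 then (if g s ≤ g (s + 1) then 1 else -1)
      else (if g (s + 1) ≤ g s then -1 else 1) := rfl

private lemma mSigma_one_step {g : ℕ → ℚ} {s : ℕ} (h : mSigma g s = 1) (hle : g s ≤ g (s+1)) :
    mSigma g (s+1) = 1 := by rw [mSigma_succ]; simp [h, hle]

private lemma mSigma_one_drop {g : ℕ → ℚ} {s : ℕ} (h : mSigma g s = 1) (hlt : g (s+1) < g s) :
    mSigma g (s+1) = -1 := by rw [mSigma_succ]; simp [h, not_le.mpr hlt]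

private lemma mSigma_neg_step {g : ℕ → ℚ} {s : ℕ} (h : mSigma g s = -1) (hle : g (s+1) ≤ g s) :
    mSigma g (s+1) = -1 := by rw [mSigma_succ]; simp [h, hle]

private lemma mSigma_neg_rise {g : ℕ → ℚ} {s : ℕ} (h : mSigma g s = -1) (hlt : g s < g (s+1)) :
    mSigma g (s+1) = 1 := by rw [mSigma_succ]; simp [h, not_le.mpr hlt]

private lemma mSigma_cases (g : ℕ → ℚ) (s : ℕ) : mSigma g s = 1 ∨ mSigma g s = -1 := by
  induction s with
  | zero => left; rfl
  | succ n ih =>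
    rcases ih with h | h
    · rcases le_or_gt (g n) (g (n+1)) with hh | hh
      · exact Or.inl (mSigma_one_step h hh)
      · exact Or.inr (mSigma_one_drop h hh)
    · rcases le_or_gt (g (n+1)) (g n) with hh | hh
      · exact Or.inr (mSigma_neg_step h hh)
      · exact Or.inl (mSigma_neg_rise h hh)

private lemma chain_mono' (g : ℕ → ℚ) {a U : ℕ} (h : ∀ t, a ≤ t → t < U → g t ≤ g (t+1)) :
    ∀ {c}, a ≤ c → c ≤ U → g a ≤ g c := by
  intro c hac hcU
  induction c, hac using Nat.le_induction with
  | base => exact le_refl _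
  | succ n hn ih =>
    exact (ih (by omega)).trans (h n hn (by omega))

private lemma chain_anti (g : ℕ → ℚ) {a : ℕ} (h : ∀ t, a ≤ t → g (t+1) ≤ g t) :
    ∀ {b c}, a ≤ b → b ≤ c → g c ≤ g b := by
  intro b c hab hbc
  induction c, hbc using Nat.le_induction with
  | base => exact le_refl _
  | succ n hn ih => exact (h n (hab.trans hn)).trans ih

variable {k : ℕ} {f : Fin (k+1) → ℕ → ℚ} {d : ℕ → ℚ}

private lemma mode_one_struct {u : ℕ} (hu : mSigma d u = 1) :
    (∀ t, t < u → d t ≤ d (t+1)) ∨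
    ∃ s, s < u ∧ mSigma d s = -1 ∧ d s < d (s+1) ∧ ∀ t, s + 1 ≤ t → t < u → d t ≤ d (t+1) := by
  induction u with
  | zero => left; omega
  | succ u ih =>
    rcases mSigma_cases d u with h1 | h1
    · have hdu : d u ≤ d (u+1) := by
        by_contra hc
        rw [mSigma_one_drop h1 (not_le.mp hc)] at hu
        norm_num at hu
      rcases ih h1 with hL | ⟨s, hs, hm, hr, hstep⟩
      · left
        intro t ht
        rcases Nat.lt_or_ge t u with h | h
        · exact hL t h
        · have : t = u := by omega
          subst this; exact hdu
      · right
        refine ⟨s, by omega, hm, hr, fun t h1t h2t => ?_⟩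
        rcases Nat.lt_or_ge t u with h | h
        · exact hstep t h1t h
        · have : t = u := by omega
          subst this; exact hdu
    · have hdu : d u < d (u+1) := by
        by_contra hc
        rw [mSigma_neg_step h1 (not_lt.mp hc)] at hu
        norm_num at hu
      right
      exact ⟨u, Nat.lt_succ_self u, h1, hdu, fun t h1t h2t => by omega⟩

private lemma drop_fresh (hle : ∀ i s, f i s ≤ d s)
    (huni : ∀ i t, f i (t+1) < f i t → ∀ u, t ≤ u → f i (u+1) ≤ f i u)
    {u : ℕ} {j : Fin (k+1)} (hu : mSigma d u = 1) (hdrop : d (u+1) < d u) (hj : f j u = d u) :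
    ∀ t, t < u → f j t ≤ f j (t+1) := by
  by_contra hc
  push_neg at hc
  obtain ⟨t, htu, hft⟩ := hc
  have hanti : ∀ {b c : ℕ}, t ≤ b → b ≤ c → f j c ≤ f j b :=
    fun hb hbc => chain_anti (f j) (huni j t hft) hb hbc
  rcases mode_one_struct hu with hL | ⟨s, hsu, hm, hr, hstep⟩
  · have h1 : d t ≤ d u := chain_mono' d (fun t' _ h2 => hL t' h2) htu.le (le_refl u)
    have h2 : f j u ≤ f j (t+1) := hanti (Nat.le_succ t) (by omega)
    linarith [hle j t]
  · rcases le_or_gt t s with hts | hst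
    · have hd1 : d (s+1) ≤ d u := chain_mono' d (fun t' h1 h2 => hstep t' h1 h2) (by omega) (le_refl u)
      have hfa : f j u ≤ f j (s+1) := hanti (by omega) (by omega)
      have hfb : f j (s+1) ≤ f j s := hanti hts (Nat.le_succ s)
      linarith [hle j s]
    · have hd1 : d t ≤ d u := chain_mono' d (fun t' h1 h2 => hstep t' (by omega) h2) htu.le (le_refl u)
      have h2 : f j u ≤ f j (t+1) := hanti (Nat.le_succ t) (by omega)
      linarith [hle j t]

private lemma rise_fresh (hle : ∀ i s, f i s ≤ d s)
    (huni : ∀ i t, f i (t+1) < f i t → ∀ u, t ≤ u → f i (u+1) ≤ f i u)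
    {s : ℕ} {w : Fin (k+1)} (hrise : d s < d (s+1)) (hw : f w (s+1) = d (s+1)) :
    ∀ t, t ≤ s → f w t ≤ f w (t+1) := by
  by_contra hc
  push_neg at hc
  obtain ⟨t, hts, hft⟩ := hc
  have h1 : f w (s+1) ≤ f w s := chain_anti (f w) (huni w t hft) hts (Nat.le_succ s)
  linarith [hle w s]

private lemma exists_drop_between {t t' : ℕ} (h1 : mSigma d t = 1) (h2 : mSigma d t' = -1)
    (htt : t ≤ t') : ∃ v, t ≤ v ∧ v < t' ∧ mSigma d v = 1 ∧ d (v+1) < d v := by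
  induction t' with
  | zero =>
    interval_cases t
    rw [h1] at h2; norm_num at h2
  | succ u ih =>
    have hne : t ≠ u + 1 := by
      intro h; subst h; rw [h1] at h2; norm_num at h2
    have htu : t ≤ u := by omega
    rcases mSigma_cases d u with hm | hm
    · have hdrop : d (u+1) < d u := by
        by_contra hc
        rw [mSigma_one_step hm (not_lt.mp hc)] at h2
        norm_num at h2
      exact ⟨u, htu, Nat.lt_succ_self u, hm, hdrop⟩
    · obtain ⟨v, hv1, hv2, hv3⟩ := ih hm htu
      exact ⟨v, hv1, by omega, hv3⟩


private lemma count_bound {k : ℕ} {f : Fin (k+1) → ℕ → ℚ} {d : ℕ → ℚ}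
    (hle : ∀ i s, f i s ≤ d s) (hex : ∀ s, ∃ i, f i s = d s)
    (huni : ∀ i t, f i (t+1) < f i t → ∀ u, t ≤ u → f i (u+1) ≤ f i u) (n : ℕ) :
    ((Finset.range n).filter (fun t => mSigma d (t+1) ≠ mSigma d t)).card ≤ 2*k+1 := by
  classical
  choose J hJ using hex
  set D := (Finset.range n).filter (fun u => mSigma d u = 1 ∧ d (u+1) < d u) with hDdef
  set R := (Finset.range n).filter (fun u => mSigma d u = -1 ∧ d u < d (u+1)) with hRdef
  -- splitting changes into drops and rises
  have hchange : ∀ t, (mSigma d (t+1) ≠ mSigma d t) ↔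
      ((mSigma d t = 1 ∧ d (t+1) < d t) ∨ (mSigma d t = -1 ∧ d t < d (t+1))) := by
    intro t
    rcases mSigma_cases d t with h | h
    · constructor
      · intro hne
        left
        refine ⟨h, ?_⟩
        by_contra hcon
        exact hne (by rw [mSigma_one_step h (not_lt.mp hcon), h])
      · rintro (⟨_, hlt⟩ | ⟨hm, _⟩)
        · rw [mSigma_one_drop h hlt, h]; norm_num
        · rw [h] at hm; norm_num at hm
    · constructor
      · intro hne
        right
        refine ⟨h, ?_⟩
        by_contra hcon
        exact hne (by rw [mSigma_neg_step h (not_lt.mp hcon), h])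
      · rintro (⟨hm, _⟩ | ⟨_, hlt⟩)
        · rw [h] at hm; norm_num at hm
        · rw [mSigma_neg_rise h hlt, h]; norm_num
  have hsplit : (Finset.range n).filter (fun t => mSigma d (t+1) ≠ mSigma d t) = D ∪ R := by
    rw [hDdef, hRdef, ← Finset.filter_or]
    exact Finset.filter_congr (fun t _ => by rw [hchange t])
  have hdisj : Disjoint D R := by
    rw [Finset.disjoint_left]
    intro t ht ht'
    rw [hDdef, Finset.mem_filter] at ht
    rw [hRdef, Finset.mem_filter] at ht'
    rw [ht.2.1] at ht'
    norm_num at ht'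
  -- injectivity of maximizers on drop times
  have hDkey : ∀ u u', u ∈ D → u' ∈ D → u < u' → J u ≠ J u' := by
    intro u u' hu hu' hlt hJeq
    rw [hDdef, Finset.mem_filter] at hu hu'
    have hfresh := drop_fresh hle huni hu'.2.1 hu'.2.2 (hJ u') u hlt
    rw [← hJeq] at hfresh
    have h2 : f (J u) (u+1) ≤ d (u+1) := hle _ _
    have h3 := hJ u
    linarith [hu.2.2]
  have hDinj : Set.InjOn J D := by
    intro u hu u' hu' heq
    by_contra hne
    rcases Nat.lt_or_ge u u' with h | h
    · exact hDkey u u' hu hu' h heq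
    · exact hDkey u' u hu' hu (by omega) heq.symm
  have hDcard : D.card ≤ k + 1 := by
    have h := Finset.card_le_card_of_injOn J (fun x _ => Finset.mem_univ (J x)) hDinj
    simpa using h
  -- the map from rises to the preceding drop
  set φ : ℕ → ℕ := fun s => Nat.findGreatest (fun u => mSigma d u = 1 ∧ d (u+1) < d u) (s-1)
    with hφdef
  have hφprop : ∀ s ∈ R, (mSigma d (φ s) = 1 ∧ d (φ s + 1) < d (φ s)) ∧ φ s < s := by
    intro s hs
    rw [hRdef, Finset.mem_filter] at hs
    obtain ⟨v, -, hvs, hv⟩ := exists_drop_between (d := d) (t := 0) rfl hs.2.1 (Nat.zero_le s)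
    refine ⟨?_, ?_⟩
    · have hspec := Nat.findGreatest_spec (m := v) (n := s-1)
        (P := fun u => mSigma d u = 1 ∧ d (u+1) < d u) (by omega) hv
      simp only [hφdef]
      exact hspec
    have hb : φ s ≤ s - 1 := by
      simp only [hφdef]
      exact Nat.findGreatest_le (s-1)
    omega
  have hφlt : ∀ s s', s ∈ R → s' ∈ R → s < s' → φ s < φ s' := by
    intro s s' hs hs' hlt
    have hsl := (hφprop s hs).2
    rw [hRdef, Finset.mem_filter] at hs hs'
    have hmode1 : mSigma d (s+1) = 1 := mSigma_neg_rise hs.2.1 hs.2.2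
    obtain ⟨v, hv1, hv2, hv3⟩ := exists_drop_between hmode1 hs'.2.1 (by omega)
    have hvle : v ≤ φ s' := Nat.le_findGreatest (by omega) hv3
    omega
  have hφmem : ∀ s ∈ R, φ s ∈ D := by
    intro s hs
    have h1 := hφprop s hs
    rw [hRdef, Finset.mem_filter] at hs
    rw [hDdef, Finset.mem_filter]
    exact ⟨Finset.mem_range.mpr (by have := Finset.mem_range.mp hs.1; omega), h1.1⟩
  have hφinj : Set.InjOn φ R := by
    intro s hs s' hs' heq
    by_contra hne
    rcases Nat.lt_or_ge s s' with h | h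
    · exact absurd heq (ne_of_lt (hφlt s s' hs hs' h))
    · exact absurd heq.symm (ne_of_lt (hφlt s' s hs' hs (by omega)))
  have hRD : R.card ≤ D.card := Finset.card_le_card_of_injOn φ hφmem hφinj
  -- final counting
  rw [hsplit, Finset.card_union_of_disjoint hdisj]
  rcases Nat.lt_or_ge D.card (k+1) with hc | hc
  · omega
  · have hDeq : D.card = k + 1 := le_antisymm hDcard hc
    have hRk : R.card ≤ k := by
      by_contra hRk
      have hReq : R.card = k + 1 := le_antisymm (hRD.trans_eq hDeq) (by omega)
      have himg : R.image φ = D := by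
        apply Finset.eq_of_subset_of_card_le
        · intro x hx
          obtain ⟨s, hs, rfl⟩ := Finset.mem_image.mp hx
          exact hφmem s hs
        · rw [Finset.card_image_of_injOn hφinj, hReq, hDeq]
      have hRne : R.Nonempty := Finset.card_pos.mp (by omega)
      obtain ⟨smax, hsmaxR, hsmaxmax⟩ : ∃ s ∈ R, ∀ s' ∈ R, s' ≤ s :=
        ⟨R.max' hRne, R.max'_mem hRne, fun s' hs' => R.le_max' s' hs'⟩
      have hsmax' := hsmaxR
      rw [hRdef, Finset.mem_filter] at hsmax'
      have hwfresh := rise_fresh hle huni hsmax'.2.2 (hJ (smax+1))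
      set w := J (smax + 1) with hwdef
      have hwnot : ∀ u ∈ D, J u ≠ w := by
        intro u hu hjw
        have husm : u < smax := by
          rw [← himg] at hu
          obtain ⟨s, hs, rfl⟩ := Finset.mem_image.mp hu
          exact lt_of_lt_of_le (hφprop s hs).2 (hsmaxmax s hs)
        rw [hDdef, Finset.mem_filter] at hu
        have h1 : f (J u) (u+1) ≤ d (u+1) := hle _ _
        have h2 := hJ u
        have h3 := hwfresh u (by omega)
        rw [← hjw] at h3
        linarith [hu.2.2]
      have hwni : w ∉ D.image J := by
        intro hw
        obtain ⟨u, hu, hju⟩ := Finset.mem_image.mp hw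
        exact hwnot u hu hju
      have hcard2 : (insert w (D.image J)).card = k + 2 := by
        rw [Finset.card_insert_of_notMem hwni, Finset.card_image_of_injOn hDinj, hDeq]
      have hcard3 : (insert w (D.image J)).card ≤ k + 1 := by
        have := Finset.card_le_univ (insert w (D.image J))
        simpa using this
      omega
    omega


end MindChangeAux

/-- If `a 1, …, a (k+1)` and `b 1, …, b (k+1)` are nondecreasing sequences of rationals
in `[0,1]`, then the sequence `d s = max_i min (a i s) (1 - b i s)` changes
monotonicity at most `2k + 1` times. -/
theorem mind_changes_of_boolean_combination_even (k : ℕ)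
    (a b : Fin (k + 1) → ℕ → ℚ)
    (ha01 : ∀ i s, 0 ≤ a i s ∧ a i s ≤ 1) (hb01 : ∀ i s, 0 ≤ b i s ∧ b i s ≤ 1)
    (hamono : ∀ i s, a i s ≤ a i (s + 1)) (hbmono : ∀ i s, b i s ≤ b i (s + 1))
    (d : ℕ → ℚ)
    (hd : ∀ s, d s = (Finset.univ : Finset (Fin (k + 1))).sup' Finset.univ_nonempty
      (fun i => min (a i s) (1 - b i s))) :
    {s | mSigma d (s + 1) ≠ mSigma d s}.Finite ∧
      {s | mSigma d (s + 1) ≠ mSigma d s}.ncard ≤ 2 * k + 1 := by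
  classical
  set f : Fin (k+1) → ℕ → ℚ := fun i s => min (a i s) (1 - b i s) with hf
  have hle : ∀ i s, f i s ≤ d s := by
    intro i s
    rw [hd s]
    simp only [hf]
    exact Finset.le_sup' (fun j => min (a j s) (1 - b j s)) (Finset.mem_univ i)
  have hex : ∀ s, ∃ i, f i s = d s := fun s => by
    obtain ⟨i, -, hi⟩ := Finset.exists_mem_eq_sup' (s := (Finset.univ : Finset (Fin (k+1))))
      Finset.univ_nonempty (fun i => min (a i s) (1 - b i s))
    exact ⟨i, by rw [hd s, hi]⟩
  have huni : ∀ i t, f i (t+1) < f i t → ∀ u, t ≤ u → f i (u+1) ≤ f i u := by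
    intro i t hdrop u htu
    have hkey : ∀ v, t + 1 ≤ v → 1 - b i v ≤ a i v := by
      intro v hv
      induction v, hv using Nat.le_induction with
      | base =>
        by_contra hc
        push_neg at hc
        have h1 : f i (t+1) = a i (t+1) := min_eq_left hc.le
        have h2 : f i t ≤ a i t := min_le_left _ _
        have h3 := hamono i t
        rw [h1] at hdrop
        linarith
      | succ v hv ih =>
        have h1 : (1:ℚ) - b i (v+1) ≤ 1 - b i v := by linarith [hbmono i v]
        exact h1.trans (ih.trans (hamono i v))
    rcases Nat.eq_or_lt_of_le htu with rfl | hlt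
    · exact hdrop.le
    · have hu1 : t + 1 ≤ u := hlt
      have e1 : f i u = 1 - b i u := min_eq_right (hkey u hu1)
      have e2 : f i (u+1) = 1 - b i (u+1) := min_eq_right (hkey (u+1) (by omega))
      rw [e1, e2]
      linarith [hbmono i u]
  have hbound := fun n => count_bound hle hex huni n
  have hfin : {s | mSigma d (s + 1) ≠ mSigma d s}.Finite := by
    by_contra hinf
    obtain ⟨T, hTsub, hTcard⟩ := Set.Infinite.exists_subset_card_eq hinf (2*k+2)
    have hTsub2 : T ⊆ (Finset.range (T.sup id + 1)).filter
        (fun t => mSigma d (t+1) ≠ mSigma d t) := by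
      intro t ht
      refine Finset.mem_filter.mpr ⟨Finset.mem_range.mpr ?_, hTsub ht⟩
      exact Nat.lt_succ_of_le (Finset.le_sup (f := id) ht)
    have := (Finset.card_le_card hTsub2).trans (hbound _)
    omega
  refine ⟨hfin, ?_⟩
  rw [Set.ncard_eq_toFinset_card _ hfin]
  have hsub : hfin.toFinset ⊆ (Finset.range (hfin.toFinset.sup id + 1)).filter
      (fun t => mSigma d (t+1) ≠ mSigma d t) := by
    intro t ht
    have ht' := ht
    rw [Set.Finite.mem_toFinset] at ht'
    refine Finset.mem_filter.mpr ⟨Finset.mem_range.mpr ?_, ht'⟩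
    exact Nat.lt_succ_of_le (Finset.le_sup (f := id) ht)
  exact (Finset.card_le_card hsub).trans (hbound _)
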